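/- Let $G$ be a finite group acting on a finite set $S$. Let $T = \{(g,h,s) \in G \times G \times S : gh = hg,\ g\cdot s = s,\ h\cdot s = s\}$. For each $g \in G$, the centralizer $C(g) = \{h \in G : hg = gh\}$ acts on the fixed-point set $S^g = \{s \in S : g\cdot s = s\}$. If $R \subseteq G$ is a complete set of representatives of the conjugacy classes of $G$ (i.e., the map sending $r \in R$ to its conjugacy class is a bijection from $R$ to the set of conjugacy classes of $G$), then $\#T = |G| \cdot \sum_{r \in R} \#\big(S^r / C(r)\big)$, where $\#(S^r/C(r))$ denotes the number of orbits of the action of $C(r)$ on $S^r$. -/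

import Mathlib

/-- The fixed-point set of `g` acting on `S`. -/
def FixedPts {G S : Type*} [Group G] [MulAction G S] (g : G) : Type _ :=
  {s : S // g • s = s}

/-- The setoid on the fixed-point set `Sᵍ` whose equivalence classes are the orbits of
the action of the centralizer `C(g) = {h : h * g = g * h}` on `Sᵍ`. -/
def centralizerOrbitSetoid {G S : Type*} [Group G] [MulAction G S] (g : G) :
    Setoid (FixedPts (G := G) (S := S) g) where
  r a b := ∃ h : G, h * g = g * h ∧ h • a.val = b.val
  iseqv := by
    constructor
    · intro a
      exact ⟨1, by rw [one_mul, mul_one], one_smul _ _⟩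
    · rintro a b ⟨h, hc, hs⟩
      refine ⟨h⁻¹, ?_, ?_⟩
      · exact Commute.inv_left hc
      · rw [← hs, inv_smul_smul]
    · rintro a b c ⟨h₁, hc₁, hs₁⟩ ⟨h₂, hc₂, hs₂⟩
      refine ⟨h₂ * h₁, ?_, ?_⟩
      · rw [mul_assoc, hc₁, ← mul_assoc, hc₂, mul_assoc]
      · rw [mul_smul, hs₁, hs₂]

section Aux

variable {G S : Type*} [Group G] [MulAction G S]

private lemma conjMul (k a b : G) : (k*a*k⁻¹)*(k*b*k⁻¹) = k*(a*b)*k⁻¹ := by group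

private lemma conj_comm_iff (g h k : G) :
    (k*h*k⁻¹) * (k*g*k⁻¹) = (k*g*k⁻¹) * (k*h*k⁻¹) ↔ h * g = g * h := by
  rw [conjMul, conjMul]
  exact ⟨fun hc => mul_left_cancel (mul_right_cancel hc), fun hc => by rw [hc]⟩

instance fixedPtsFinite [Finite S] (g : G) : Finite (FixedPts (G := G) (S := S) g) :=
  Subtype.finite

noncomputable instance fixedPtsFintype [Fintype S] (g : G) :
    Fintype (FixedPts (G := G) (S := S) g) :=
  Fintype.ofFinite _

instance fixedPtsAction (g : G) :
    MulAction (Subgroup.centralizer ({g} : Set G)) (FixedPts (G := G) (S := S) g) where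
  smul h s := ⟨(h : G) • s.val, by
    have hc : (h : G) * g = g * (h : G) := Subgroup.mem_centralizer_singleton_iff.mp h.2
    rw [smul_smul, ← hc, mul_smul, s.2]⟩
  one_smul s := Subtype.ext (one_smul G s.val)
  mul_smul a b s := Subtype.ext (mul_smul (a : G) (b : G) s.val)

lemma fixedPts_smul_val (g : G) (h : Subgroup.centralizer ({g} : Set G))
    (s : FixedPts (G := G) (S := S) g) : (h • s).val = (h : G) • s.val := rfl

/-- The custom setoid agrees with `orbitRel` of the centralizer action. -/
def quotEquiv (g : G) :
    Quotient (centralizerOrbitSetoid (S := S) g) ≃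
      Quotient (MulAction.orbitRel (Subgroup.centralizer ({g} : Set G))
        (FixedPts (G := G) (S := S) g)) :=
  Quotient.congrRight fun a b => by
    rw [MulAction.orbitRel_apply, MulAction.mem_orbit_iff]
    constructor
    · rintro ⟨h, hc, hs⟩
      refine ⟨⟨h⁻¹, Subgroup.mem_centralizer_singleton_iff.mpr (Commute.inv_left hc)⟩,
        Subtype.ext ?_⟩
      rw [fixedPts_smul_val, ← hs, inv_smul_smul]
    · rintro ⟨⟨h, hm⟩, hs⟩
      refine ⟨h⁻¹, Commute.inv_left (Subgroup.mem_centralizer_singleton_iff.mp hm), ?_⟩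
      have hs' : h • b.val = a.val := congrArg Subtype.val hs
      rw [← hs', inv_smul_smul]

/-- Conjugating the group element gives an equivalence of fixed points compatible with
the centralizer-orbit setoids. -/
lemma norb_conj (g k : G) :
    Nat.card (Quotient (centralizerOrbitSetoid (S := S) (k * g * k⁻¹)))
      = Nat.card (Quotient (centralizerOrbitSetoid (S := S) g)) := by
  refine (Nat.card_congr (Quotient.congr ?_ ?_)).symm
  · refine
      { toFun := fun s => ⟨k • s.val, ?_⟩
        invFun := fun s => ⟨k⁻¹ • s.val, ?_⟩
        left_inv := fun s => Subtype.ext (inv_smul_smul k s.val)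
        right_inv := fun s => Subtype.ext (smul_inv_smul k s.val) }
    · rw [smul_smul, mul_assoc, inv_mul_cancel, mul_one, mul_smul, s.2]
    · have h1 : g • k⁻¹ • s.val = k⁻¹ • (k * g * k⁻¹) • s.val := by
        rw [smul_smul, smul_smul]
        congr 1
        group
      rw [h1, s.2]
  · intro a b
    constructor
    · rintro ⟨h, hc, hs⟩
      refine ⟨k * h * k⁻¹, (conj_comm_iff g h k).mpr hc, ?_⟩
      show (k * h * k⁻¹) • (k • a.val) = k • b.val
      rw [smul_smul, mul_assoc, inv_mul_cancel, mul_one, mul_smul, hs]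
    · rintro ⟨h', hc', hs'⟩
      refine ⟨k⁻¹ * h' * k, ?_, ?_⟩
      · have hh : k * (k⁻¹ * h' * k) * k⁻¹ = h' := by group
        refine (conj_comm_iff g (k⁻¹ * h' * k) k).mp ?_
        rw [hh]; exact hc'
      · have hs'' : h' • (k • a.val) = k • b.val := hs'
        rw [mul_smul, mul_smul, hs'', inv_smul_smul]

lemma cent_conj (g k : G) :
    Nat.card (Subgroup.centralizer ({k * g * k⁻¹} : Set G))
      = Nat.card (Subgroup.centralizer ({g} : Set G)) := by
  refine (Nat.card_congr ?_).symm
  refine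
    { toFun := fun h => ⟨k * h.val * k⁻¹, Subgroup.mem_centralizer_singleton_iff.mpr
        ((conj_comm_iff g h.val k).mpr (Subgroup.mem_centralizer_singleton_iff.mp h.2))⟩
      invFun := fun h => ⟨k⁻¹ * h.val * k, ?_⟩
      left_inv := fun h => Subtype.ext (by group)
      right_inv := fun h => Subtype.ext (by group) }
  refine Subgroup.mem_centralizer_singleton_iff.mpr ?_
  have hh : k * (k⁻¹ * h.val * k) * k⁻¹ = h.val := by group
  refine (conj_comm_iff g (k⁻¹ * h.val * k) k).mp ?_
  rw [hh]
  exact Subgroup.mem_centralizer_singleton_iff.mp h.2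

/-- Orbit-stabilizer for the conjugation action:
`#(conjugacy class of r) * #(centralizer of r) = |G|`. -/
lemma class_card [Fintype G] (r : G) :
    Nat.card {g : G // IsConj r g} * Nat.card (Subgroup.centralizer ({r} : Set G))
      = Fintype.card G := by
  classical
  have e1 : {g : G // IsConj r g} ≃ MulAction.orbit (ConjAct G) r :=
    Equiv.subtypeEquivRight fun g => isConj_comm.trans (ConjAct.mem_orbit_conjAct).symm
  have e2 : (Subgroup.centralizer ({r} : Set G)) ≃ MulAction.stabilizer (ConjAct G) r :=
    Equiv.subtypeEquiv ConjAct.toConjAct.toEquiv fun h => by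
      rw [Subgroup.centralizer_eq_comap_stabilizer]
      rfl
  rw [Nat.card_congr e1, Nat.card_congr e2, Nat.card_eq_fintype_card, Nat.card_eq_fintype_card]
  rw [MulAction.card_orbit_mul_card_stabilizer_eq_card_group (ConjAct G) r]
  exact Fintype.card_congr ConjAct.ofConjAct.toEquiv

/-- Per-element Burnside count. -/
lemma key [Fintype G] [Fintype S] (g : G) :
    Nat.card {q : G × S // g * q.1 = q.1 * g ∧ g • q.2 = q.2 ∧ q.1 • q.2 = q.2}
      = Nat.card (Quotient (centralizerOrbitSetoid (S := S) g)) *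
        Nat.card (Subgroup.centralizer ({g} : Set G)) := by
  classical
  have e : {q : G × S // g * q.1 = q.1 * g ∧ g • q.2 = q.2 ∧ q.1 • q.2 = q.2} ≃
      Σ h : Subgroup.centralizer ({g} : Set G),
        MulAction.fixedBy (FixedPts (G := G) (S := S) g) h :=
    { toFun := fun q => ⟨⟨q.1.1, Subgroup.mem_centralizer_singleton_iff.mpr q.2.1.symm⟩,
        ⟨⟨q.1.2, q.2.2.1⟩, Subtype.ext q.2.2.2⟩⟩
      invFun := fun x => ⟨(x.1.val, x.2.val.val),
        ⟨(Subgroup.mem_centralizer_singleton_iff.mp x.1.2).symm, x.2.val.2,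
          congrArg Subtype.val x.2.2⟩⟩
      left_inv := fun q => rfl
      right_inv := fun x => rfl }
  rw [Nat.card_congr e, Nat.card_eq_fintype_card, Fintype.card_sigma]
  rw [MulAction.sum_card_fixedBy_eq_card_orbits_mul_card_group]
  rw [Nat.card_congr (quotEquiv (S := S) g), Nat.card_eq_fintype_card, Nat.card_eq_fintype_card]

end Aux

/-- If a finite group `G` acts on a finite set `S`,
`T = {(g,h,s) : gh = hg, g • s = s, h • s = s}`, and `R` is a complete set of
representatives of the conjugacy classes of `G`, then
`#T = |G| * ∑_{r ∈ R} #(Sʳ / C(r))`. -/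
theorem orbifold_euler_char_localization
    (G S : Type*) [Group G] [Fintype G] [MulAction G S] [Fintype S]
    (R : Finset G)
    (hR : Set.BijOn (fun r => ConjClasses.mk r) (R : Set G)
      (Set.univ : Set (ConjClasses G))) :
    Nat.card {p : G × G × S //
        p.1 * p.2.1 = p.2.1 * p.1 ∧ p.1 • p.2.2 = p.2.2 ∧ p.2.1 • p.2.2 = p.2.2}
      = Fintype.card G *
        ∑ r ∈ R, Nat.card (Quotient (centralizerOrbitSetoid (S := S) r)) := by
  classical
  set f : G → ℕ := fun g => Nat.card (Quotient (centralizerOrbitSetoid (S := S) g)) *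
    Nat.card (Subgroup.centralizer ({g} : Set G)) with hf
  have e0 : {p : G × G × S //
        p.1 * p.2.1 = p.2.1 * p.1 ∧ p.1 • p.2.2 = p.2.2 ∧ p.2.1 • p.2.2 = p.2.2} ≃
      Σ g : G, {q : G × S // g * q.1 = q.1 * g ∧ g • q.2 = q.2 ∧ q.1 • q.2 = q.2} :=
    { toFun := fun p => ⟨p.1.1, ⟨(p.1.2.1, p.1.2.2), p.2⟩⟩
      invFun := fun x => ⟨(x.1, x.2.val.1, x.2.val.2), x.2.2⟩
      left_inv := fun p => rfl
      right_inv := fun x => rfl }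
  rw [Nat.card_congr e0, Nat.card_eq_fintype_card, Fintype.card_sigma]
  have hterm : ∀ g : G, Fintype.card
      {q : G × S // g * q.1 = q.1 * g ∧ g • q.2 = q.2 ∧ q.1 • q.2 = q.2} = f g := by
    intro g
    rw [← Nat.card_eq_fintype_card, hf]
    exact key g
  rw [Finset.sum_congr rfl fun g _ => hterm g]
  rw [← Finset.sum_fiberwise Finset.univ (fun g => ConjClasses.mk g) f]
  rw [Finset.mul_sum]
  refine (Finset.sum_bij (i := fun (r : G) (_ : r ∈ R) => ConjClasses.mk r)
    (fun r _ => Finset.mem_univ _) ?_ ?_ ?_).symm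
  · intro a ha b hb hab
    exact hR.injOn (by exact_mod_cast ha) (by exact_mod_cast hb) hab
  · intro c _
    obtain ⟨r, hr, hrc⟩ := hR.surjOn (Set.mem_univ c)
    exact ⟨r, by exact_mod_cast hr, hrc⟩
  · intro r hrR
    -- goal : card G * Norb r = ∑ g ∈ filter (mk · = mk r), f g
    have hconst : ∀ g ∈ Finset.univ.filter (fun g => ConjClasses.mk g = ConjClasses.mk r),
        f g = f r := by
      intro g hg
      have hg' : IsConj g r := ConjClasses.mk_eq_mk_iff_isConj.mp (Finset.mem_filter.mp hg).2
      obtain ⟨c, hc⟩ := isConj_iff.mp hg'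
      rw [hf]
      dsimp only
      rw [← hc, norb_conj, cent_conj]
    rw [Finset.sum_const_nat hconst]
    have hcard : (Finset.univ.filter (fun g => ConjClasses.mk g = ConjClasses.mk r)).card
        = Nat.card {g : G // IsConj r g} := by
      rw [Nat.card_eq_fintype_card, Fintype.card_subtype]
      refine congrArg Finset.card (Finset.filter_congr fun g _ => ?_)
      rw [ConjClasses.mk_eq_mk_iff_isConj]
      exact isConj_comm
    rw [hcard, hf]
    dsimp only
    rw [show Nat.card {g : G // IsConj r g} *
        (Nat.card (Quotient (centralizerOrbitSetoid (S := S) r)) *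
          Nat.card (Subgroup.centralizer ({r} : Set G)))
      = (Nat.card {g : G // IsConj r g} * Nat.card (Subgroup.centralizer ({r} : Set G))) *
          Nat.card (Quotient (centralizerOrbitSetoid (S := S) r)) from by ring]
    rw [class_card]
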